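/- arXiv:1706.02441 — 5 statements merged into one kernel-verified Lean document; each statement's English description precedes it below -/
import Mathlib

section
/- In a plane-oriented recursive tree on n nodes, for a fixed node label j with 2 ≤ j ≤ n, the probability that the degree of node j equals 1 is Γ(n-1)Γ(j-1/2) / (Γ(n-1/2)Γ(j-1)). -/
/-!
The recurrence `p m = p (m - 1) * (2m - 4) / (2m - 3)` is also satisfied by
`m ↦ Γ(m - 1) / Γ(m - 1/2)`, by the functional equation `Γ(x + 1) = x Γ(x)`.
Two solutions of the same first-order multiplicative recurrence are proportional,
and normalising by the value at `m = j` gives the closed form.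
-/

open Real

theorem mul_eq_mul_of_recurrence {K : Type*} [CommMonoid K] {p g r : ℕ → K} {j n : ℕ}
    (hjn : j ≤ n) (hp : ∀ m, j < m → p m = p (m - 1) * r m)
    (hg : ∀ m, j < m → g m = g (m - 1) * r m) :
    p n * g j = p j * g n := by
  induction n, hjn using Nat.le_induction with
  | base => rfl
  | succ m hjm ih =>
    rw [hp (m + 1) (by omega), hg (m + 1) (by omega), Nat.add_sub_cancel, mul_right_comm, ih,
      mul_assoc]

theorem Gamma_div_Gamma_add_half_add_one {x : ℝ} (hx : x ≠ 0) (hx' : x + 1 / 2 ≠ 0) :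
    Gamma (x + 1) / Gamma (x + 1 / 2 + 1) = Gamma x / Gamma (x + 1 / 2) * (x / (x + 1 / 2)) := by
  rw [Gamma_add_one hx, Gamma_add_one hx', mul_div_mul_comm, mul_comm]

theorem Gamma_sub_one_div_Gamma_sub_half_recurrence {m : ℕ} (hm : 3 ≤ m) :
    Gamma ((m : ℝ) - 1) / Gamma ((m : ℝ) - 1 / 2) =
      Gamma (((m - 1 : ℕ) : ℝ) - 1) / Gamma (((m - 1 : ℕ) : ℝ) - 1 / 2) *
        ((2 * (m : ℝ) - 4) / (2 * (m : ℝ) - 3)) := by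
  have hm' : (3 : ℝ) ≤ m := by exact_mod_cast hm
  have hratio : (2 * (m : ℝ) - 4) / (2 * (m : ℝ) - 3) = (m - 2) / (m - 2 + 1 / 2) := by
    rw [div_eq_div_iff (by linarith) (by linarith)]
    ring
  rw [Nat.cast_sub (by omega), Nat.cast_one, hratio, show (m : ℝ) - 1 - 1 = m - 2 by ring,
    show (m : ℝ) - 1 - 1 / 2 = m - 2 + 1 / 2 by ring, show (m : ℝ) - 1 = m - 2 + 1 by ring,
    show (m : ℝ) - 1 / 2 = m - 2 + 1 / 2 + 1 by ring]
  exact Gamma_div_Gamma_add_half_add_one (by linarith) (by linarith)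

theorem Gamma_sub_one_div_Gamma_sub_half_pos {j : ℕ} (hj : 2 ≤ j) :
    0 < Gamma ((j : ℝ) - 1) / Gamma ((j : ℝ) - 1 / 2) := by
  have hj' : (2 : ℝ) ≤ j := by exact_mod_cast hj
  exact div_pos (Gamma_pos_of_pos (by linarith)) (Gamma_pos_of_pos (by linarith))

/-- In a PORT, node `j` (for `2 ≤ j ≤ n`) has degree 1 at time `n` iff it is never
chosen as a parent from time `j+1` through `n`. `p m` denotes the probability that
`D_{m,j} = 1`; it satisfies `p j = 1` and, since node `j` (of degree 1) is chosen at
time `m` with probability `1/(2m-3)`, `p m = p (m-1) * (2m-4)/(2m-3)` for `m > j`.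
The closed form is `Γ(n-1)Γ(j-1/2)/(Γ(n-1/2)Γ(j-1))`. -/
theorem port_prob_degree_one (j n : ℕ) (hj : 2 ≤ j) (hjn : j ≤ n)
    (p : ℕ → ℝ) (hinit : p j = 1)
    (hrec : ∀ m : ℕ, j < m → p m = p (m - 1) * (2 * (m : ℝ) - 4) / (2 * (m : ℝ) - 3)) :
    p n = Real.Gamma ((n : ℝ) - 1) * Real.Gamma ((j : ℝ) - 1 / 2) /
      (Real.Gamma ((n : ℝ) - 1 / 2) * Real.Gamma ((j : ℝ) - 1)) := by
  set g : ℕ → ℝ := fun m ↦ Gamma ((m : ℝ) - 1) / Gamma ((m : ℝ) - 1 / 2)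
  have hprop : p n * g j = p j * g n :=
    mul_eq_mul_of_recurrence hjn (fun m hm ↦ by rw [hrec m hm, mul_div_assoc])
      (fun m _ ↦ Gamma_sub_one_div_Gamma_sub_half_recurrence (by omega))
  have hgj : g j ≠ 0 := (Gamma_sub_one_div_Gamma_sub_half_pos hj).ne'
  rw [← div_div_div_eq, eq_div_iff hgj, hprop, hinit, one_mul]
end

section
/- In a plane-oriented recursive tree on n nodes, for fixed 2 ≤ j ≤ n and 1 ≤ d ≤ n-j+1, the probability that node j has degree d is P(D_{n,j} = d) = [Γ(d)Γ(j - 1/2) / Γ(n - 1/2)] · Σ_{i=0}^{d-1} (-1)^i Γ(n - 1 - i/2) / (Γ(i+1) Γ(d-i) Γ(j - 1 - i/2)). -/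
/-!
Since `Γ(d) / (Γ(i+1) Γ(d-i)) = C(d-1, i)` and the Gamma ratios `Γ(n-1-i/2) / Γ(j-1-i/2)` and
`Γ(n-1/2) / Γ(j-1/2)` are rising factorials of length `n - j`, the closed form is
`Σ_{i<d} (-1)^i C(d-1,i) (j-1-i/2)^{(n-j)} / (j-1/2)^{(n-j)}`. In this form the recurrence holds for
every `d ≥ 1`, term by term, because `C(d-1,i) (d-1-i) = (d-1) C(d-2,i)`, and at `n = j` the sum is
the alternating binomial sum `[d = 1]`; induction on `n` concludes.
-/

open Finset Polynomial

/-- Lean's `Γ` vanishes at the poles `-m`; the identity still holds there iff `m < r`. -/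
theorem Real.Gamma_add_nat_div_Gamma_eq (z : ℝ) (r : ℕ) (hz : ∀ m : ℕ, z = -m → m < r) :
    Real.Gamma (z + r) / Real.Gamma z = (ascPochhammer ℝ r).eval z := by
  by_cases h : ∀ m : ℕ, z ≠ -m
  · have hC : ∀ m : ℕ, (z : ℂ) ≠ -m := fun m hm => h m (by exact_mod_cast hm)
    have := Complex.Gamma_add_nat_div_Gamma_eq (z : ℂ) (n := r) hC
    rw [← ascPochhammer_map Complex.ofRealHom, eval_map, ← Complex.ofRealHom_eq_coe,
      eval₂_at_apply, Complex.ofRealHom_eq_coe, ← Complex.ofReal_natCast, ← Complex.ofReal_add,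
      Complex.Gamma_ofReal, Complex.Gamma_ofReal, ← Complex.ofReal_div] at this
    exact Complex.ofReal_injective this
  · push Not at h
    obtain ⟨m, rfl⟩ := h
    rw [Real.Gamma_neg_nat_eq_zero, div_zero, eq_comm, ascPochhammer_eval_eq_zero_iff]
    exact ⟨m, hz m rfl, by simp⟩

theorem Real.Gamma_div_Gamma_mul_Gamma_eq_choose {d i : ℕ} (hi : i < d) :
    Real.Gamma d / (Real.Gamma (i + 1) * Real.Gamma ((d : ℝ) - i)) = ((d - 1).choose i : ℝ) := by
  obtain ⟨e, rfl⟩ := Nat.exists_eq_add_of_lt hi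
  have hsub : ((i + e + 1 : ℕ) : ℝ) - i = ((e : ℕ) : ℝ) + 1 := by push_cast; ring
  rw [hsub, show ((i + e + 1 : ℕ) : ℝ) = ((i + e : ℕ) : ℝ) + 1 by push_cast; ring,
    Real.Gamma_nat_eq_factorial, Real.Gamma_nat_eq_factorial, Real.Gamma_nat_eq_factorial,
    Nat.add_sub_cancel, Nat.cast_choose ℝ (Nat.le_add_right i e), Nat.add_sub_cancel_left]

theorem sum_range_choose_mul_sub_mul {R : Type*} [CommRing R] (e : ℕ) (f : ℕ → R) :
    ∑ i ∈ range (e + 1), (e.choose i : R) * ((e : R) - i) * f i =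
      e * ∑ i ∈ range e, ((e - 1).choose i : R) * f i := by
  cases e with
  | zero => simp
  | succ k =>
    rw [sum_range_succ, sub_self, mul_zero, zero_mul, add_zero, mul_sum, Nat.add_sub_cancel]
    refine sum_congr rfl fun i hi => ?_
    have h : ((k.choose i * (k + 1) : ℕ) : R) = (((k + 1).choose i * (k + 1 - i) : ℕ) : R) :=
      congrArg _ (Nat.choose_mul_succ_eq k i)
    push_cast [Nat.cast_sub (show i ≤ k + 1 by simp at hi; omega)] at h ⊢
    linear_combination -(f i) * h

/-- `portDegreeProb (j - 1) (n - j) d` is `P(D_{n,j} = d)`. -/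
noncomputable def portDegreeProb (a : ℝ) (r d : ℕ) : ℝ :=
  (∑ i ∈ range d, (-1) ^ i * ((d - 1).choose i : ℝ) * (ascPochhammer ℝ r).eval (a - i / 2)) /
    (ascPochhammer ℝ r).eval (a + 1 / 2)

theorem portDegreeProb_zero (a : ℝ) (d : ℕ) :
    portDegreeProb a 0 d = if d = 1 then 1 else 0 := by
  cases d with
  | zero => simp [portDegreeProb]
  | succ e =>
    have h := Int.alternating_sum_range_choose (n := e)
    simp only [portDegreeProb, ascPochhammer_zero, eval_one, mul_one, div_one,
      Nat.add_sub_cancel, Nat.add_eq_right]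
    exact_mod_cast h

theorem portDegreeProb_succ (a : ℝ) (ha : 0 < a + 1 / 2) (r d : ℕ) (hd : 1 ≤ d) :
    portDegreeProb a (r + 1) d =
      ((d : ℝ) - 1) / (2 * (a + r) + 1) * portDegreeProb a r (d - 1) +
        (2 * (a + r) + 1 - d) / (2 * (a + r) + 1) * portDegreeProb a r d := by
  obtain ⟨e, rfl⟩ := Nat.exists_eq_add_of_le' hd
  have hQ := (ascPochhammer_pos r _ ha).ne'
  set Q : ℕ → ℝ := fun i => (ascPochhammer ℝ r).eval (a - i / 2)
  have hnum :
      (∑ i ∈ range (e + 1), (-1) ^ i * (e.choose i : ℝ) * (Q i * (a - i / 2 + r))) * 2 =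
      e * ∑ i ∈ range e, (-1) ^ i * ((e - 1).choose i : ℝ) * Q i +
        (2 * (a + r) - e) * ∑ i ∈ range (e + 1), (-1) ^ i * (e.choose i : ℝ) * Q i :=
    calc _ = ∑ i ∈ range (e + 1), ((e.choose i : ℝ) * ((e : ℝ) - i) * ((-1) ^ i * Q i) +
          (2 * (a + r) - e) * ((-1) ^ i * (e.choose i : ℝ) * Q i)) := by
          rw [sum_mul]
          exact sum_congr rfl fun i _ => by ring
      _ = e * ∑ i ∈ range e, ((e - 1).choose i : ℝ) * ((-1) ^ i * Q i) +
          (2 * (a + r) - e) * ∑ i ∈ range (e + 1), (-1) ^ i * (e.choose i : ℝ) * Q i := by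
          rw [sum_add_distrib, sum_range_choose_mul_sub_mul, ← mul_sum]
      _ = _ := by
          congr 2
          exact sum_congr rfl fun i _ => by ring
  simp only [portDegreeProb, ascPochhammer_succ_eval, Nat.add_sub_cancel]
  generalize (ascPochhammer ℝ r).eval (a + 1 / 2) = P at hQ ⊢
  generalize ∑ i ∈ range (e + 1), (-1) ^ i * (e.choose i : ℝ) * (Q i * (a - i / 2 + r)) = T
    at hnum ⊢
  generalize ∑ i ∈ range (e + 1), (-1) ^ i * (e.choose i : ℝ) * Q i = S at hnum ⊢
  generalize ∑ i ∈ range e, (-1) ^ i * ((e - 1).choose i : ℝ) * Q i = S' at hnum ⊢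
  rw [show 2 * (a + r) + 1 = 2 * (a + 1 / 2 + r) by ring]
  rw [div_mul_div_comm, div_mul_div_comm, ← add_div,
    div_eq_div_iff (by positivity) (by positivity)]
  push_cast
  linear_combination (P * (a + 1 / 2 + r)) * hnum

theorem portDegreeProb_eq_gamma (j r d : ℕ) (hj : 2 ≤ j) (hd : d ≤ r + 1) :
    portDegreeProb ((j : ℝ) - 1) r d =
      Real.Gamma d * Real.Gamma ((j : ℝ) - 1 / 2) / Real.Gamma (((j + r : ℕ) : ℝ) - 1 / 2) *
        ∑ i ∈ range d, (-1 : ℝ) ^ i * Real.Gamma (((j + r : ℕ) : ℝ) - 1 - (i : ℝ) / 2) /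
          (Real.Gamma ((i : ℝ) + 1) * Real.Gamma ((d : ℝ) - (i : ℝ)) *
            Real.Gamma ((j : ℝ) - 1 - (i : ℝ) / 2)) := by
  have hjR : (2 : ℝ) ≤ j := by exact_mod_cast hj
  have hnorm : Real.Gamma (((j + r : ℕ) : ℝ) - 1 / 2) / Real.Gamma ((j : ℝ) - 1 / 2) =
      (ascPochhammer ℝ r).eval ((j : ℝ) - 1 + 1 / 2) := by
    rw [← Real.Gamma_add_nat_div_Gamma_eq _ r fun m hm => by
      linarith [(m.cast_nonneg : (0 : ℝ) ≤ m)]]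
    push_cast; ring_nf
  have hterm : ∀ i ∈ range d, Real.Gamma d * ((-1 : ℝ) ^ i *
        Real.Gamma (((j + r : ℕ) : ℝ) - 1 - (i : ℝ) / 2) /
        (Real.Gamma ((i : ℝ) + 1) * Real.Gamma ((d : ℝ) - (i : ℝ)) *
          Real.Gamma ((j : ℝ) - 1 - (i : ℝ) / 2))) =
      (-1) ^ i * ((d - 1).choose i : ℝ) * (ascPochhammer ℝ r).eval ((j : ℝ) - 1 - i / 2) := by
    intro i hi
    have hid : i < d := mem_range.mp hi
    have hir : (i : ℝ) ≤ r := by exact_mod_cast (show i ≤ r by omega)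
    have hpoch : Real.Gamma (((j + r : ℕ) : ℝ) - 1 - (i : ℝ) / 2) /
        Real.Gamma ((j : ℝ) - 1 - (i : ℝ) / 2) =
          (ascPochhammer ℝ r).eval ((j : ℝ) - 1 - i / 2) := by
      rw [← Real.Gamma_add_nat_div_Gamma_eq _ r fun m hm => ?_]
      · push_cast; ring_nf
      · have : (m : ℝ) < r := by linarith
        exact_mod_cast this
    rw [← hpoch, ← Real.Gamma_div_Gamma_mul_Gamma_eq_choose hid]
    ring
  rw [mul_comm (Real.Gamma d), mul_div_right_comm, ← inv_div, hnorm, mul_assoc, mul_sum,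
    sum_congr rfl hterm, portDegreeProb, inv_mul_eq_div]

open Finset in
/-- Degree distribution of node `j` (for `2 ≤ j ≤ n`) in a PORT.
`p m d` denotes `P(D_{m,j} = d)`.  At time `j`, node `j` has degree 1, and the
probabilities evolve by `P(D_{m,j}=d) = ((d-1)/(2m-3)) P(D_{m-1,j}=d-1)
+ ((2m-3-d)/(2m-3)) P(D_{m-1,j}=d)`.  The closed form is
`[Γ(d)Γ(j-1/2)/Γ(n-1/2)] Σ_{i=0}^{d-1} (-1)^i Γ(n-1-i/2)/(Γ(i+1)Γ(d-i)Γ(j-1-i/2))`. -/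
theorem port_degree_pmf (j n : ℕ) (hj : 2 ≤ j) (hjn : j ≤ n)
    (p : ℕ → ℕ → ℝ)
    (hinit : ∀ d : ℕ, p j d = if d = 1 then 1 else 0)
    (hrec : ∀ m d : ℕ, j < m → 1 ≤ d →
      p m d = ((d : ℝ) - 1) / (2 * (m : ℝ) - 3) * p (m - 1) (d - 1) +
        (2 * (m : ℝ) - 3 - (d : ℝ)) / (2 * (m : ℝ) - 3) * p (m - 1) d) :
    ∀ d : ℕ, 1 ≤ d → d ≤ n - j + 1 →
      p n d = Real.Gamma (d : ℝ) * Real.Gamma ((j : ℝ) - 1 / 2) / Real.Gamma ((n : ℝ) - 1 / 2) *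
        ∑ i ∈ range d, (-1 : ℝ) ^ i * Real.Gamma ((n : ℝ) - 1 - (i : ℝ) / 2) /
          (Real.Gamma ((i : ℝ) + 1) * Real.Gamma ((d : ℝ) - (i : ℝ)) *
            Real.Gamma ((j : ℝ) - 1 - (i : ℝ) / 2)) := by
  obtain ⟨r, rfl⟩ := Nat.exists_eq_add_of_le hjn
  have ha : (0 : ℝ) < (j : ℝ) - 1 + 1 / 2 := by
    have : (2 : ℝ) ≤ j := by exact_mod_cast hj
    linarith
  have hp : ∀ r d, 1 ≤ d → p (j + r) d = portDegreeProb ((j : ℝ) - 1) r d := by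
    intro r
    induction r with
    | zero => intro d _; rw [add_zero, hinit, portDegreeProb_zero]
    | succ r ih =>
      intro d hd
      have hprev : ((d : ℝ) - 1) * p (j + r) (d - 1) =
          ((d : ℝ) - 1) * portDegreeProb ((j : ℝ) - 1) r (d - 1) := by
        rcases hd.eq_or_lt with rfl | hd
        · simp
        · rw [ih _ (by omega)]
      rw [hrec _ _ (by omega) hd, ← add_assoc, Nat.add_sub_cancel, ih d hd,
        portDegreeProb_succ _ ha _ _ hd, div_mul_eq_mul_div, hprev, ← div_mul_eq_mul_div]
      push_cast
      ring
  intro d hd hdr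
  rw [hp r d hd, portDegreeProb_eq_gamma j r d hj (by omega)]
end

section
/- In a plane-oriented recursive tree on n ≥ 2 nodes, the variance of the degree of node j (for fixed 1 ≤ j ≤ n) is Var[D_{n,j}] = −Γ²(n)Γ²(j−1/2)/(Γ²(n−1/2)Γ²(j)) − Γ(n)Γ(j−1/2)/(Γ(n−1/2)Γ(j)) + (4n−2)/(2j−1). -/
/-!
Both moment recurrences are first-order and linear with rational coefficients. The ratio
`G m = degreeRatio j m = Γ(m)Γ(j-1/2)/(Γ(m-1/2)Γ(j))` solves the homogeneous recurrence
`(2m-3) G m = (2m-2) G (m-1)` of the first moment, and `E[D_m] = G m - c` with `c = δ_{j,1}`.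
For the second moment `2m-1` solves the homogeneous recurrence and `c² - (1+2c) G m` is a
particular solution, so `E[D_m²] = μ (2m-1) + c² - (1+2c) G m` with `μ = 2/(2j-1)` fixed by the
initial value. In the variance the terms involving `c` cancel.
-/

open Real

noncomputable def gammaHalfRatio (x : ℝ) : ℝ := Gamma x / Gamma (x - 1 / 2)

theorem gammaHalfRatio_pos {x : ℝ} (hx : 1 / 2 < x) : 0 < gammaHalfRatio x :=
  div_pos (Gamma_pos_of_pos (by linarith)) (Gamma_pos_of_pos (by linarith))

theorem gammaHalfRatio_sub_one {x : ℝ} (hx : 3 / 2 < x) :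
    (2 * x - 3) * gammaHalfRatio x = (2 * x - 2) * gammaHalfRatio (x - 1) := by
  have hnum : Gamma x = (x - 1) * Gamma (x - 1) := by
    simpa using Gamma_add_one (s := x - 1) (by linarith)
  have hden : Gamma (x - 1 / 2) = (x - 3 / 2) * Gamma (x - 1 - 1 / 2) := by
    rw [show x - 1 / 2 = x - 1 - 1 / 2 + 1 by ring, Gamma_add_one (by linarith)]
    ring_nf
  have hne : Gamma (x - 1 - 1 / 2) ≠ 0 := (Gamma_pos_of_pos (by linarith)).ne'
  have hx' : x - 3 / 2 ≠ 0 := by linarith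
  unfold gammaHalfRatio
  rw [hnum, hden, mul_div_mul_comm, ← mul_assoc]
  congr 1
  rw [mul_div_assoc', div_eq_iff hx']
  ring

noncomputable def degreeRatio (j m : ℕ) : ℝ := gammaHalfRatio m / gammaHalfRatio j

theorem degreeRatio_eq (j m : ℕ) :
    degreeRatio j m = Gamma m * Gamma (j - 1 / 2) / (Gamma (m - 1 / 2) * Gamma j) :=
  div_div_div_eq _ _ _ _

theorem degreeRatio_sub_one (j : ℕ) {m : ℕ} (hm : 2 ≤ m) :
    (2 * (m : ℝ) - 3) * degreeRatio j m = (2 * m - 2) * degreeRatio j (m - 1) := by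
  have hm' : (2 : ℝ) ≤ m := by exact_mod_cast hm
  simp only [degreeRatio, mul_div_assoc', Nat.cast_sub (by omega : 1 ≤ m), Nat.cast_one,
    gammaHalfRatio_sub_one (by linarith : (3 / 2 : ℝ) < m)]

theorem degreeRatio_self {j : ℕ} (hj : 1 ≤ j) : degreeRatio j j = 1 := by
  have hj' : (1 : ℝ) ≤ j := by exact_mod_cast hj
  exact div_self (gammaHalfRatio_pos (by linarith)).ne'

theorem degreeRatio_one_two : degreeRatio 1 2 = 2 := by
  have h := gammaHalfRatio_sub_one (x := 2) (by norm_num)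
  norm_num at h
  rw [degreeRatio, Nat.cast_ofNat, Nat.cast_one, h, mul_div_assoc,
    div_self (gammaHalfRatio_pos (by norm_num)).ne', mul_one]

theorem two_mul_natCast_sub_three_ne_zero (m : ℕ) : 2 * (m : ℝ) - 3 ≠ 0 := by
  intro h
  have : ((2 * m : ℕ) : ℝ) = (3 : ℕ) := by push_cast; linarith
  have := Nat.cast_injective this
  omega

section MomentRecurrences

variable {k : ℕ} {G e s : ℕ → ℝ} {c μ : ℝ}

theorem first_moment_eq
    (hG : ∀ m, k < m → (2 * (m : ℝ) - 3) * G m = (2 * m - 2) * G (m - 1))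
    (he₀ : e k = G k - c)
    (he : ∀ m, k < m → e m = e (m - 1) + (e (m - 1) + c) / (2 * (m : ℝ) - 3)) :
    ∀ m, k ≤ m → e m = G m - c := by
  intro m hm
  induction m, hm using Nat.le_induction with
  | base => exact he₀
  | succ m hm ih =>
    have hGm := hG (m + 1) (by omega)
    have hem := he (m + 1) (by omega)
    have hne := two_mul_natCast_sub_three_ne_zero (m + 1)
    simp only [Nat.add_sub_cancel, ih] at hGm hem hne
    rw [hem, eq_sub_iff_add_eq, ← mul_left_inj' hne]
    field_simp
    linear_combination -hGm

theorem second_moment_eq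
    (hG : ∀ m, k < m → (2 * (m : ℝ) - 3) * G m = (2 * m - 2) * G (m - 1))
    (he : ∀ m, k ≤ m → e m = G m - c)
    (hs₀ : s k = μ * (2 * k - 1) + c ^ 2 - (1 + 2 * c) * G k)
    (hs : ∀ m, k < m →
      s m = s (m - 1) + (2 * s (m - 1) + (1 + 2 * c) * e (m - 1) + c) / (2 * (m : ℝ) - 3)) :
    ∀ m, k ≤ m → s m = μ * (2 * m - 1) + c ^ 2 - (1 + 2 * c) * G m := by
  intro m hm
  induction m, hm using Nat.le_induction with
  | base => exact hs₀
  | succ m hm ih =>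
    have hGm := hG (m + 1) (by omega)
    have hsm := hs (m + 1) (by omega)
    have hne := two_mul_natCast_sub_three_ne_zero (m + 1)
    simp only [Nat.add_sub_cancel, ih, he m hm] at hGm hsm hne
    rw [hsm, ← mul_left_inj' hne]
    field_simp
    push_cast at hGm ⊢
    linear_combination (1 + 2 * c) * hGm

end MomentRecurrences

/-- `e m` and `s m` are the first and second moments of `D_{m,j}`. Node `j` enters with
degree 1 at time `max j 2`; at time `m` node `j` of degree `d` is chosen with probability
`(d + δ_{j,1})/(2m-3)`, the root carrying one extra insertion position. -/
theorem port_degree_variance (j n : ℕ) (hj : 1 ≤ j) (hjn : j ≤ n) (hn : 2 ≤ n)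
    (e s : ℕ → ℝ) (hinite : e (max j 2) = 1) (hinits : s (max j 2) = 1)
    (hrece : ∀ m : ℕ, max j 2 < m →
      e m = e (m - 1) + (e (m - 1) + (if j = 1 then 1 else 0)) / (2 * (m : ℝ) - 3))
    (hrecs : ∀ m : ℕ, max j 2 < m →
      s m = s (m - 1) +
        (2 * s (m - 1) + (if j = 1 then 3 else 1) * e (m - 1) + (if j = 1 then 1 else 0)) /
          (2 * (m : ℝ) - 3)) :
    s n - (e n) ^ 2 =
      -(Real.Gamma (n : ℝ)) ^ 2 * (Real.Gamma ((j : ℝ) - 1 / 2)) ^ 2 /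
          ((Real.Gamma ((n : ℝ) - 1 / 2)) ^ 2 * (Real.Gamma (j : ℝ)) ^ 2) -
        Real.Gamma (n : ℝ) * Real.Gamma ((j : ℝ) - 1 / 2) /
          (Real.Gamma ((n : ℝ) - 1 / 2) * Real.Gamma (j : ℝ)) +
        (4 * (n : ℝ) - 2) / (2 * (j : ℝ) - 1) := by
  set c : ℝ := if j = 1 then 1 else 0 with hc
  -- given `G k = 1 + c`, the second conjunct is `s k = 1` in the closed form of `second_moment_eq`
  have hinit : degreeRatio j (max j 2) = 1 + c ∧
      2 / (2 * (j : ℝ) - 1) * (2 * (max j 2 : ℕ) - 1) = (1 + c) * (2 + c) := by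
    rcases eq_or_ne j 1 with rfl | hj1
    · norm_num [hc, degreeRatio_one_two]
    · have h2j : (2 : ℝ) ≤ j := by exact_mod_cast (show 2 ≤ j by omega)
      rw [max_eq_left (by omega), degreeRatio_self hj]
      simp only [hc, hj1, if_false]
      rw [div_mul_eq_mul_div, mul_div_assoc, div_self (by linarith)]
      norm_num
  have hcoeff : (if j = 1 then (3 : ℝ) else 1) = 1 + 2 * c := by
    split_ifs <;> norm_num [hc, *]
  have hG (m : ℕ) (hm : max j 2 < m) := degreeRatio_sub_one j (m := m) (by omega)
  have he := first_moment_eq hG (by rw [hinite, hinit.1]; ring) hrece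
  have hs := second_moment_eq (s := s) (μ := 2 / (2 * (j : ℝ) - 1)) hG he
    (by rw [hinits, hinit.1, hinit.2]; ring) (by simpa only [hcoeff] using hrecs)
  have hkn : max j 2 ≤ n := max_le hjn hn
  rw [hs n hkn, he n hkn, degreeRatio_eq]
  ring
end

section
/- For the Zagreb index Z_n of a plane-oriented recursive tree on n nodes, Z_n / (n log n) converges to 2 in probability (and in L¹) as n → ∞. -/
/-!
Put `Y n = Z n / (n log n)`. Cauchy–Schwarz gives `E|Y n - 2| ≤ √Var[Y n] + |E[Y n] - 2|`.
Since `H_{n-1} ~ log n`, the mean `2(n-1)H_{n-1}/(n log n)` tends to `2`, and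
`Var[Y n] = Var[Z n]/(n log n)² = O(1/log² n)`. So `Y n → 2` in `L¹`, hence in measure.
-/

open MeasureTheory ProbabilityTheory Filter Topology Asymptotics

section Moments

variable {Ω : Type*} [MeasurableSpace Ω] {μ : Measure Ω} [IsProbabilityMeasure μ] {X : Ω → ℝ}

/- `0 ≤ Var[|X - μ[X]|] = Var[X] - (μ[|X - μ[X]|])²`. -/
lemma integral_abs_sub_integral_le_sqrt_variance (hX : MemLp X 2 μ) :
    ∫ ω, |X ω - μ[X]| ∂μ ≤ √(Var[X; μ]) := by
  have hdev : MemLp (fun ω => |X ω - μ[X]|) 2 μ := (hX.sub (memLp_const _)).abs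
  have hvar := variance_nonneg (fun ω => |X ω - μ[X]|) μ
  rw [variance_eq_sub hdev] at hvar
  refine Real.le_sqrt_of_sq_le ?_
  rw [variance_eq_integral hX.aemeasurable]
  simpa [sq_abs] using hvar

lemma integral_abs_sub_le_sqrt_variance_add (hX : MemLp X 2 μ) (a : ℝ) :
    ∫ ω, |X ω - a| ∂μ ≤ √(Var[X; μ]) + |μ[X] - a| := by
  have hdev : Integrable (fun ω => |X ω - μ[X]|) μ :=
    ((hX.integrable one_le_two).sub (integrable_const _)).abs
  calc ∫ ω, |X ω - a| ∂μ ≤ ∫ ω, (|X ω - μ[X]| + |μ[X] - a|) ∂μ :=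
        integral_mono ((hX.integrable one_le_two).sub (integrable_const _)).abs
          (hdev.add (integrable_const _)) fun ω => abs_sub_le _ _ _
    _ = ∫ ω, |X ω - μ[X]| ∂μ + |μ[X] - a| := by
        rw [integral_add hdev (integrable_const _), integral_const, probReal_univ, one_smul]
    _ ≤ √(Var[X; μ]) + |μ[X] - a| := by
        gcongr; exact integral_abs_sub_integral_le_sqrt_variance hX

end Moments

section Convergence

variable {ι Ω : Type*} [MeasurableSpace Ω] {μ : Measure Ω} {l : Filter ι}

lemma tendsto_integral_abs_sub_of_tendsto_variance [IsProbabilityMeasure μ] {Y : ι → Ω → ℝ}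
    {a : ℝ} (hY : ∀ i, MemLp (Y i) 2 μ) (hmean : Tendsto (fun i => μ[Y i]) l (𝓝 a))
    (hvar : Tendsto (fun i => Var[Y i; μ]) l (𝓝 0)) :
    Tendsto (fun i => ∫ ω, |Y i ω - a| ∂μ) l (𝓝 0) := by
  have hbound : Tendsto (fun i => √(Var[Y i; μ]) + |μ[Y i] - a|) l (𝓝 0) := by
    simpa using hvar.sqrt.add (hmean.sub_const a).abs
  exact squeeze_zero (fun i => integral_nonneg fun _ => abs_nonneg _)
    (fun i => integral_abs_sub_le_sqrt_variance_add (hY i) a) hbound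

lemma tendstoInMeasure_of_tendsto_integral_abs_sub {f : ι → Ω → ℝ} {g : Ω → ℝ}
    (hf : ∀ i, Integrable (f i) μ) (hg : Integrable g μ)
    (h : Tendsto (fun i => ∫ ω, |f i ω - g ω| ∂μ) l (𝓝 0)) : TendstoInMeasure μ f l g := by
  refine tendstoInMeasure_of_tendsto_eLpNorm one_ne_zero (fun i => (hf i).aestronglyMeasurable)
    hg.aestronglyMeasurable ?_
  have heq : ∀ i, eLpNorm (f i - g) 1 μ = ENNReal.ofReal (∫ ω, |f i ω - g ω| ∂μ) := fun i => by
    rw [eLpNorm_one_eq_lintegral_enorm, ← ofReal_integral_norm_eq_lintegral_enorm ((hf i).sub hg)]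
    rfl
  simpa [heq, Function.comp_def] using (ENNReal.continuous_ofReal.tendsto 0).comp h

end Convergence

section Asymptotics

open Real

lemma tendsto_harmonic_pred_div_log :
    Tendsto (fun n : ℕ => (harmonic (n - 1) : ℝ) / log n) atTop (𝓝 1) := by
  have hlog : Tendsto (fun n : ℕ => log n) atTop atTop :=
    tendsto_log_atTop.comp tendsto_natCast_atTop_atTop
  have hsub : Tendsto (fun n : ℕ => (harmonic (n - 1) : ℝ) - log n) atTop
      (𝓝 eulerMascheroniConstant) := by
    refine (tendsto_harmonic_sub_log_add_one.comp (tendsto_sub_atTop_nat 1)).congr' ?_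
    filter_upwards [eventually_ge_atTop 1] with n hn
    simp [Nat.cast_sub hn]
  have hratio := (hsub.div_atTop hlog).add_const 1
  rw [zero_add] at hratio
  refine hratio.congr' ?_
  filter_upwards [eventually_ge_atTop 2] with n hn
  have : log n ≠ 0 := (log_pos (by exact_mod_cast hn)).ne'
  field_simp
  ring

lemma tendsto_sub_one_mul_harmonic_pred_div_mul_log :
    Tendsto (fun n : ℕ => ((n : ℝ) - 1) * harmonic (n - 1) / (n * log n)) atTop (𝓝 1) := by
  have hfrac : Tendsto (fun n : ℕ => ((n : ℝ) - 1) / n) atTop (𝓝 1) := by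
    have : Tendsto (fun n : ℕ => 1 - (n : ℝ)⁻¹) atTop (𝓝 (1 - 0)) :=
      (tendsto_inv_atTop_zero.comp tendsto_natCast_atTop_atTop).const_sub 1
    rw [sub_zero] at this
    refine this.congr' ?_
    filter_upwards [eventually_ne_atTop 0] with n hn
    simp [sub_div, hn]
  simpa [mul_div_mul_comm] using hfrac.mul tendsto_harmonic_pred_div_log

lemma isBigO_sq_of_sub_isBigO_rpow {f : ℕ → ℝ} {k p : ℝ} (hp : p ≤ 2)
    (h : (fun n => f n - k * (n : ℝ) ^ 2) =O[atTop] fun n => (n : ℝ) ^ p) :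
    f =O[atTop] fun n => (n : ℝ) ^ 2 := by
  have hrpow : (fun n : ℕ => (n : ℝ) ^ p) =O[atTop] fun n => (n : ℝ) ^ 2 := by
    refine Eventually.isBigO ?_
    filter_upwards [eventually_ge_atTop 1] with n hn
    have hn : (1 : ℝ) ≤ n := by exact_mod_cast hn
    rw [Real.norm_of_nonneg (by positivity), ← Real.rpow_two]
    exact Real.rpow_le_rpow_of_exponent_le hn hp
  simpa using (h.trans hrpow).add ((isBigO_refl _ _).const_mul_left k)

lemma tendsto_div_mul_log_sq_of_isBigO_sq {f : ℕ → ℝ} (hf : f =O[atTop] fun n => (n : ℝ) ^ 2) :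
    Tendsto (fun n : ℕ => f n / (n * log n) ^ 2) atTop (𝓝 0) := by
  have hlog : Tendsto (fun n : ℕ => log n ^ 2) atTop atTop :=
    (tendsto_pow_atTop two_ne_zero).comp (tendsto_log_atTop.comp tendsto_natCast_atTop_atTop)
  have hsq : (fun n : ℕ => (n : ℝ) ^ 2) =o[atTop] fun n => ((n : ℝ) * log n) ^ 2 := by
    refine (isLittleO_iff_tendsto' ?_).2 (hlog.inv_tendsto_atTop.congr' ?_)
    · filter_upwards [eventually_ge_atTop 2] with n hn h0
      have : log n ≠ 0 := (log_pos (by exact_mod_cast hn)).ne'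
      simp_all
    · filter_upwards [eventually_ne_atTop 0] with n hn
      simp only [Pi.inv_apply]
      field_simp
  exact (hf.trans_isLittleO hsq).tendsto_div_nhds_zero

end Asymptotics

open MeasureTheory Filter in
/-- Weak law for the Zagreb index of a PORT: if `Z n : Ω → ℝ` is the Zagreb index of
a PORT on `n` nodes — square-integrable, with mean `E[Z_n] = 2(n−1)H_{n−1}` and
variance `Var[Z_n] = (16 − 2π²/3) n² + O(n^{3/2})` — then `Z_n/(n log n) → 2` both in
`L¹` and in probability (in measure) as `n → ∞`. -/
theorem port_zagreb_weak_law {Ω : Type*} [MeasureSpace Ω]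
    [IsProbabilityMeasure (volume : Measure Ω)]
    (Z : ℕ → Ω → ℝ) (hL2 : ∀ n, MemLp (Z n) 2 volume)
    (hmean : ∀ n : ℕ, 1 ≤ n → ∫ ω, Z n ω = 2 * ((n : ℝ) - 1) * (harmonic (n - 1) : ℝ))
    (hvar : ∃ C : ℝ, ∀ n : ℕ, 2 ≤ n →
      |ProbabilityTheory.variance (Z n) volume - (16 - 2 * Real.pi ^ 2 / 3) * (n : ℝ) ^ 2| ≤
        C * (n : ℝ) ^ ((3 : ℝ) / 2)) :
    Tendsto (fun n : ℕ => ∫ ω, |Z n ω / ((n : ℝ) * Real.log n) - 2|) atTop (nhds 0) ∧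
      TendstoInMeasure volume (fun n ω => Z n ω / ((n : ℝ) * Real.log n)) atTop
        (fun _ => (2 : ℝ)) := by
  obtain ⟨C, hC⟩ := hvar
  have hY2 : ∀ n : ℕ, MemLp (fun ω => Z n ω / ((n : ℝ) * Real.log n)) 2 volume :=
    fun n => by simpa only [div_eq_mul_inv] using (hL2 n).mul_const _
  have hmeanY : Tendsto (fun n : ℕ => ∫ ω, Z n ω / ((n : ℝ) * Real.log n)) atTop (𝓝 2) := by
    have h := tendsto_sub_one_mul_harmonic_pred_div_mul_log.const_mul 2
    rw [mul_one] at h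
    refine h.congr' ?_
    filter_upwards [eventually_ge_atTop 1] with n hn
    rw [integral_div, hmean n hn]
    ring
  have hvarZ : (fun n => Var[Z n; volume]) =O[atTop] fun n => (n : ℝ) ^ 2 := by
    refine isBigO_sq_of_sub_isBigO_rpow (k := 16 - 2 * Real.pi ^ 2 / 3)
      (by norm_num : (3 : ℝ) / 2 ≤ 2) (.of_bound C ?_)
    filter_upwards [eventually_ge_atTop 2] with n hn
    simpa [abs_of_nonneg (by positivity : (0 : ℝ) ≤ (n : ℝ) ^ ((3 : ℝ) / 2))] using hC n hn
  have hvarY : Tendsto (fun n : ℕ => Var[fun ω => Z n ω / ((n : ℝ) * Real.log n); volume])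
      atTop (𝓝 0) := by
    refine (tendsto_div_mul_log_sq_of_isBigO_sq hvarZ).congr fun n => ?_
    simp_rw [div_eq_mul_inv, variance_mul_const]
    ring
  have hL1 := tendsto_integral_abs_sub_of_tendsto_variance hY2 hmeanY hvarY
  exact ⟨hL1, tendstoInMeasure_of_tendsto_integral_abs_sub
    (fun n => (hY2 n).integrable one_le_two) (integrable_const 2) hL1⟩
end

section
/- For the Zagreb index Z_n of a plane-oriented recursive tree, the sequence M_n = (2/(n−1)) Z_n − 4(Ψ(n) + γ) for n ≥ 2 is a martingale with respect to the natural filtration: E[M_n | F_{n−1}] = M_{n−1} for n ≥ 3. -/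
open MeasureTheory

theorem MeasureTheory.condExp_const_mul_sub_const {Ω : Type*} {m m0 : MeasurableSpace Ω}
    (hm : m ≤ m0) {μ : Measure Ω} [IsFiniteMeasure μ] {f : Ω → ℝ} (hf : Integrable f μ)
    (a b : ℝ) :
    μ[fun ω => a * f ω - b|m] =ᵐ[μ] fun ω => a * μ[f|m] ω - b := by
  have hsub : μ[fun ω => a * f ω - b|m] =ᵐ[μ] μ[fun ω => a * f ω|m] - μ[fun _ => b|m] :=
    condExp_sub (hf.const_mul a) (integrable_const b) m
  have hmul : μ[fun ω => a * f ω|m] =ᵐ[μ] fun ω => a * μ[f|m] ω := condExp_smul a f m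
  filter_upwards [hsub, hmul] with ω hsub hmul
  rw [Pi.sub_apply] at hsub
  rw [hsub, hmul, condExp_const hm]

theorem harmonic_pred_eq_add_inv {n : ℕ} (hn : 2 ≤ n) :
    (harmonic (n - 1) : ℝ) = harmonic (n - 2) + ((n : ℝ) - 1)⁻¹ := by
  obtain ⟨k, rfl⟩ := Nat.exists_eq_add_of_le' hn
  rw [show k + 2 - 1 = k + 1 by omega, Nat.add_sub_cancel, harmonic_succ]
  push_cast
  ring_nf

/-- `harmonic (n - 1) = Ψ(n) + γ`, so the right-hand side is `M_{n-1}`. -/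
theorem port_zagreb_martingale_general {Ω : Type*} {m m0 : MeasurableSpace Ω}
    (hm : m ≤ m0) (μ : Measure Ω) [IsProbabilityMeasure μ]
    (n : ℕ) (hn : 3 ≤ n) (Zn Zprev : Ω → ℝ)
    (hZn : Integrable Zn μ)
    (hcond : μ[Zn|m] =ᵐ[μ] fun ω => ((n : ℝ) - 1) / ((n : ℝ) - 2) * Zprev ω + 2) :
    μ[fun ω => 2 / ((n : ℝ) - 1) * Zn ω - 4 * (harmonic (n - 1) : ℝ)|m] =ᵐ[μ]
      fun ω => 2 / ((n : ℝ) - 2) * Zprev ω - 4 * (harmonic (n - 2) : ℝ) := by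
  have hn' : (3 : ℝ) ≤ n := by exact_mod_cast hn
  have hn1 : (n : ℝ) - 1 ≠ 0 := by linarith
  have hn2 : (n : ℝ) - 2 ≠ 0 := by linarith
  filter_upwards [condExp_const_mul_sub_const hm hZn (2 / ((n : ℝ) - 1)) _, hcond]
    with ω hlin hZ
  rw [hlin, hZ, harmonic_pred_eq_add_inv (by omega)]
  field_simp
  ring

open MeasureTheory in
/-- Martingale property for the Zagreb index of a PORT.  With `Zn = Z_n` the Zagreb
index at time `n ≥ 3`, `Zprev = Z_{n−1}`, and `m ≤ m0` the σ-field `F_{n−1}`, the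
conditional-expectation identity `E[Z_n | F_{n−1}] = ((n−1)/(n−2)) Z_{n−1} + 2`
implies `E[(2/(n−1)) Z_n − 4H_{n−1} | F_{n−1}] = (2/(n−2)) Z_{n−1} − 4H_{n−2}`
(with `Ψ(n) + γ = H_{n−1}`); that is, `M_n = (2/(n−1)) Z_n − 4(Ψ(n) + γ)` is a
martingale. -/
theorem port_zagreb_martingale {Ω : Type*} {m m0 : MeasurableSpace Ω}
    (hm : m ≤ m0) (μ : Measure Ω) [IsProbabilityMeasure μ]
    (n : ℕ) (hn : 3 ≤ n) (Zn Zprev : Ω → ℝ)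
    (hZn : Integrable Zn μ) (hZprev : Integrable Zprev μ)
    (hmeas : StronglyMeasurable[m] Zprev)
    (hcond : μ[Zn|m] =ᵐ[μ] fun ω => ((n : ℝ) - 1) / ((n : ℝ) - 2) * Zprev ω + 2) :
    μ[fun ω => 2 / ((n : ℝ) - 1) * Zn ω - 4 * (harmonic (n - 1) : ℝ)|m] =ᵐ[μ]
      fun ω => 2 / ((n : ℝ) - 2) * Zprev ω - 4 * (harmonic (n - 2) : ℝ) :=
  port_zagreb_martingale_general hm μ n hn Zn Zprev hZn hcond
end
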